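/- For 0 < α < 1, x > 0 and y > 0, the inequality E_α((x+y)^α) < E_α(x^α) · E_α(y^α) is strict. -/

import Mathlib

noncomputable def mittagLeffler (α x : ℝ) : ℝ :=
  ∑' k : ℕ, x ^ k / Real.Gamma (α * k + 1)

open Finset Filter Topology MeasureTheory Real intervalIntegral

/-!
Write `g_k(t) = t ^ (α k) / Γ(α k + 1)`, so that `E_α(t ^ α) = ∑ₖ g_k(t)` and, by the Beta integral,
`g_{k+1}` is the Riemann–Liouville integral `I^α g_k`. For `α ≤ 1` the kernel `(t - s) ^ (α - 1)`
decreases in `t`, whence `I^α f (x + y) ≤ I^α f (x) + I^α (f (x + ·)) (y)` for `f ≥ 0`. Induction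
on `k` then gives `g_k(x + y) ≤ ∑_{i + j = k} g_i(x) g_j(y)`, and summing over `k` bounds
`E_α((x + y) ^ α)` by the Cauchy product `E_α(x ^ α) E_α(y ^ α)`. The inequality is strict at
`k = 1`, where it reads `(x + y) ^ α < x ^ α + y ^ α`.
-/

theorem integral_rpow_mul_sub_rpow {p q T : ℝ} (hp : 0 < p) (hq : 0 < q) (hT : 0 < T) :
    ∫ s in (0)..T, s ^ (p - 1) * (T - s) ^ (q - 1)
      = Gamma p * Gamma q / Gamma (p + q) * T ^ (p + q - 1) := by
  have hB := Complex.Gamma_mul_Gamma_eq_betaIntegral (s := p) (t := q) (by simpa) (by simpa)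
  have hΓ : (Gamma (p + q) : ℂ) ≠ 0 := by exact_mod_cast (Gamma_pos_of_pos (by linarith)).ne'
  apply Complex.ofReal_injective
  have hcast : ((∫ s in (0)..T, s ^ (p - 1) * (T - s) ^ (q - 1) : ℝ) : ℂ)
      = ∫ s in (0)..T, (s : ℂ) ^ ((p : ℂ) - 1) * ((T : ℂ) - s) ^ ((q : ℂ) - 1) := by
    rw [← intervalIntegral.integral_ofReal]
    refine intervalIntegral.integral_congr fun s hs => ?_
    rw [Set.uIcc_of_le hT.le] at hs
    simp only [Complex.ofReal_mul, Complex.ofReal_cpow hs.1, Complex.ofReal_cpow (sub_nonneg.2 hs.2),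
      Complex.ofReal_sub, Complex.ofReal_one]
  rw [hcast, Complex.betaIntegral_scaled _ _ hT]
  push_cast [Complex.ofReal_cpow hT.le, ← Complex.Gamma_ofReal] at hB hΓ ⊢
  rw [hB, mul_comm]
  field_simp

theorem rpow_add_lt_add_rpow {p x y : ℝ} (hx : 0 < x) (hy : 0 < y) (hp1 : p < 1) :
    (x + y) ^ p < x ^ p + y ^ p := by
  have hxy : 0 < x + y := add_pos hx hy
  calc (x + y) ^ p = x * (x + y) ^ (p - 1) + y * (x + y) ^ (p - 1) := by
        rw [← add_mul, rpow_sub_one hxy.ne', mul_div_cancel₀ _ hxy.ne']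
    _ < x * x ^ (p - 1) + y * y ^ (p - 1) := by
        gcongr ?_ + ?_
        · exact mul_lt_mul_of_pos_left (rpow_lt_rpow_of_neg hx (by linarith) (by linarith)) hx
        · exact mul_lt_mul_of_pos_left (rpow_lt_rpow_of_neg hy (by linarith) (by linarith)) hy
    _ = x ^ p + y ^ p := by
        rw [rpow_sub_one hx.ne', rpow_sub_one hy.ne', mul_div_cancel₀ _ hx.ne',
          mul_div_cancel₀ _ hy.ne']

/-- Log-convexity of `Gamma` at `z + α` and `z + α + 1`, with weights `α` and `1 - α`. -/
theorem Gamma_add_one_le_Gamma_add_mul_rpow {α z : ℝ} (hα0 : 0 < α) (hα1 : α < 1) (hz : 0 < z) :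
    Gamma (z + 1) ≤ Gamma (z + α) * (z + α) ^ (1 - α) := by
  have hzα : 0 < z + α := by linarith
  have hΓ := (Gamma_pos_of_pos hzα).le
  have h := Gamma_mul_add_mul_le_rpow_Gamma_mul_rpow_Gamma hzα (by linarith : 0 < z + α + 1)
    hα0 (by linarith : 0 < 1 - α) (by ring)
  rwa [show α * (z + α) + (1 - α) * (z + α + 1) = z + 1 by ring, Gamma_add_one hzα.ne',
    mul_rpow hzα.le hΓ, mul_left_comm, ← rpow_add' hΓ (by norm_num), add_sub_cancel,
    rpow_one, mul_comm] at h

theorem Gamma_div_Gamma_add_le {α z : ℝ} (hα0 : 0 < α) (hα1 : α < 1) (hz : 0 < z) (hαz : α ≤ z) :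
    Gamma z / Gamma (z + α) ≤ 2 ^ (1 - α) * z ^ (-α) := by
  have hΓ : 0 < Gamma (z + α) := Gamma_pos_of_pos (by linarith)
  have h2z : (z + α) ^ (1 - α) ≤ 2 ^ (1 - α) * z ^ (1 - α) := by
    rw [← mul_rpow zero_le_two hz.le]
    exact rpow_le_rpow (by linarith) (by linarith) (by linarith)
  rw [div_le_iff₀ hΓ, show -α = 1 - α - 1 by ring, rpow_sub_one hz.ne']
  have := Gamma_add_one_le_Gamma_add_mul_rpow hα0 hα1 hz
  rw [Gamma_add_one hz.ne'] at this
  calc Gamma z = z * Gamma z / z := by field_simp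
    _ ≤ Gamma (z + α) * (2 ^ (1 - α) * z ^ (1 - α)) / z :=
        div_le_div_of_nonneg_right (this.trans (mul_le_mul_of_nonneg_left h2z hΓ.le)) hz.le
    _ = _ := by ring

theorem tendsto_Gamma_div_Gamma_add {α : ℝ} (hα0 : 0 < α) (hα1 : α < 1) :
    Tendsto (fun z => Gamma z / Gamma (z + α)) atTop (𝓝 0) := by
  have hbound := (tendsto_rpow_neg_atTop hα0).const_mul (2 ^ (1 - α))
  rw [mul_zero] at hbound
  refine tendsto_of_tendsto_of_tendsto_of_le_of_le' tendsto_const_nhds hbound ?_ ?_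
  · filter_upwards [eventually_gt_atTop 0] with z hz
    exact div_nonneg (Gamma_pos_of_pos hz).le (Gamma_pos_of_pos (by linarith)).le
  · filter_upwards [eventually_gt_atTop 0, eventually_ge_atTop α] with z hz hαz
    exact Gamma_div_Gamma_add_le hα0 hα1 hz hαz

noncomputable def riemannLiouville (α : ℝ) (f : ℝ → ℝ) (t : ℝ) : ℝ :=
  (Gamma α)⁻¹ * ∫ s in (0)..t, f s * (t - s) ^ (α - 1)

section RiemannLiouville

variable {α : ℝ} {f g : ℝ → ℝ}

theorem intervalIntegrable_mul_sub_rpow (hα : 0 < α) (hf : Continuous f) (t : ℝ) :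
    IntervalIntegrable (fun s => f s * (t - s) ^ (α - 1)) volume 0 t := by
  have hker : IntervalIntegrable (fun s => (t - s) ^ (α - 1)) volume 0 t := by
    simpa using (intervalIntegrable_rpow' (a := t) (b := 0) (by linarith)).comp_sub_left t
  exact hker.continuousOn_mul hf.continuousOn

theorem riemannLiouville_mono (hα : 0 < α) (hf : Continuous f) (hg : Continuous g) {t : ℝ}
    (ht : 0 ≤ t) (hfg : ∀ s ∈ Set.Ioo 0 t, f s ≤ g s) :
    riemannLiouville α f t ≤ riemannLiouville α g t := by
  refine mul_le_mul_of_nonneg_left ?_ (inv_nonneg.2 (Gamma_pos_of_pos hα).le)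
  refine intervalIntegral.integral_mono_on_of_le_Ioo ht (intervalIntegrable_mul_sub_rpow hα hf t)
    (intervalIntegrable_mul_sub_rpow hα hg t) fun s hs => ?_
  exact mul_le_mul_of_nonneg_right (hfg s hs) (rpow_nonneg (by linarith [hs.2]) _)

theorem riemannLiouville_sum_mul {ι : Type*} (hα : 0 < α) (s : Finset ι) (c : ι → ℝ)
    {f : ι → ℝ → ℝ} (hf : ∀ i ∈ s, Continuous (f i)) (t : ℝ) :
    riemannLiouville α (fun u => ∑ i ∈ s, c i * f i u) t
      = ∑ i ∈ s, c i * riemannLiouville α (f i) t := by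
  simp only [riemannLiouville, Finset.sum_mul, mul_assoc]
  rw [intervalIntegral.integral_finsetSum fun i hi =>
    (intervalIntegrable_mul_sub_rpow hα (hf i hi) t).const_mul (c i), Finset.mul_sum]
  simp only [intervalIntegral.integral_const_mul, mul_left_comm]

theorem riemannLiouville_add_le (hα0 : 0 < α) (hα1 : α ≤ 1) (hf : Continuous f) {x y : ℝ}
    (hx : 0 ≤ x) (hy : 0 ≤ y) (hf0 : ∀ s ∈ Set.Icc 0 x, 0 ≤ f s) :
    riemannLiouville α f (x + y)
      ≤ riemannLiouville α f x + riemannLiouville α (fun u => f (x + u)) y := by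
  set F := fun s => f s * (x + y - s) ^ (α - 1)
  have hF := intervalIntegrable_mul_sub_rpow hα0 hf (x + y)
  have hxmem : x ∈ Set.uIcc 0 (x + y) := Set.mem_uIcc_of_le hx (by linarith)
  have hsplit := integral_add_adjacent_intervals
    (hF.mono_set (Set.uIcc_subset_uIcc Set.left_mem_uIcc hxmem))
    (hF.mono_set (Set.uIcc_subset_uIcc hxmem Set.right_mem_uIcc))
  have hleft : ∫ s in (0)..x, F s ≤ ∫ s in (0)..x, f s * (x - s) ^ (α - 1) := by
    refine integral_mono_on_of_le_Ioo hx
      (hF.mono_set (Set.uIcc_subset_uIcc Set.left_mem_uIcc hxmem))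
      (intervalIntegrable_mul_sub_rpow hα0 hf x) fun s hs => ?_
    exact mul_le_mul_of_nonneg_left
      (rpow_le_rpow_of_nonpos (by linarith [hs.2]) (by linarith) (by linarith))
      (hf0 s (Set.Ioo_subset_Icc_self hs))
  have hright : ∫ s in x..(x + y), F s = ∫ u in (0)..y, f (x + u) * (y - u) ^ (α - 1) := by
    have h := integral_comp_add_left F x (a := 0) (b := y)
    rw [add_zero] at h
    rw [← h]
    congr with u
    simp only [F, add_sub_add_left_eq_sub]
  rw [riemannLiouville, ← hsplit, hright, riemannLiouville, riemannLiouville, ← mul_add]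
  exact mul_le_mul_of_nonneg_left (by linarith) (inv_nonneg.2 (Gamma_pos_of_pos hα0).le)

end RiemannLiouville

noncomputable def mittagLefflerTerm (α : ℝ) (k : ℕ) (t : ℝ) : ℝ :=
  t ^ (α * k) / Gamma (α * k + 1)

section MittagLefflerTerm

variable {α : ℝ}

@[simp]
theorem mittagLefflerTerm_zero (t : ℝ) : mittagLefflerTerm α 0 t = 1 := by
  simp [mittagLefflerTerm]

theorem mittagLefflerTerm_nonneg (hα : 0 ≤ α) (k : ℕ) {t : ℝ} (ht : 0 ≤ t) :
    0 ≤ mittagLefflerTerm α k t :=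
  div_nonneg (rpow_nonneg ht _) (Gamma_pos_of_pos (by positivity)).le

theorem continuous_mittagLefflerTerm (hα : 0 ≤ α) (k : ℕ) : Continuous (mittagLefflerTerm α k) :=
  (continuous_rpow_const (by positivity)).div_const _

theorem mittagLeffler_rpow_eq_tsum {t : ℝ} (ht : 0 ≤ t) :
    mittagLeffler α (t ^ α) = ∑' k, mittagLefflerTerm α k t := by
  simp only [mittagLeffler, mittagLefflerTerm, ← rpow_natCast, ← rpow_mul ht]

theorem riemannLiouville_mittagLefflerTerm (hα : 0 < α) (k : ℕ) {t : ℝ} (ht : 0 < t) :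
    riemannLiouville α (mittagLefflerTerm α k) t = mittagLefflerTerm α (k + 1) t := by
  have hΓ : Gamma α ≠ 0 := (Gamma_pos_of_pos hα).ne'
  have hΓk : Gamma (α * k + 1) ≠ 0 := (Gamma_pos_of_pos (by positivity)).ne'
  have hbeta := integral_rpow_mul_sub_rpow (by positivity : 0 < α * k + 1) hα ht
  simp only [add_sub_cancel_right] at hbeta
  simp only [riemannLiouville, mittagLefflerTerm, div_mul_eq_mul_div, intervalIntegral.integral_div,
    hbeta]
  rw [show α * k + 1 + α - 1 = α * (k + 1 : ℕ) by push_cast; ring,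
    show α * k + 1 + α = α * (k + 1 : ℕ) + 1 by push_cast; ring]
  field_simp

theorem mittagLefflerTerm_add_le (hα0 : 0 < α) (hα1 : α ≤ 1) (k : ℕ) {x y : ℝ} (hx : 0 < x)
    (hy : 0 < y) :
    mittagLefflerTerm α k (x + y)
      ≤ ∑ p ∈ antidiagonal k, mittagLefflerTerm α p.1 x * mittagLefflerTerm α p.2 y := by
  induction k generalizing y with
  | zero => simp
  | succ k ih =>
    have hcont := continuous_mittagLefflerTerm hα0.le
    calc mittagLefflerTerm α (k + 1) (x + y)
        = riemannLiouville α (mittagLefflerTerm α k) (x + y) :=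
          (riemannLiouville_mittagLefflerTerm hα0 k (by positivity)).symm
      _ ≤ riemannLiouville α (mittagLefflerTerm α k) x
          + riemannLiouville α (fun u => mittagLefflerTerm α k (x + u)) y :=
          riemannLiouville_add_le hα0 hα1 (hcont k) hx.le hy.le
            fun s hs => mittagLefflerTerm_nonneg hα0.le k hs.1
      _ ≤ riemannLiouville α (mittagLefflerTerm α k) x
          + riemannLiouville α (fun u => ∑ p ∈ antidiagonal k,
              mittagLefflerTerm α p.1 x * mittagLefflerTerm α p.2 u) y := by
          gcongr 1
          exact riemannLiouville_mono hα0 ((hcont k).comp (continuous_const_add x))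
            (continuous_finsetSum _ fun p _ => (hcont p.2).const_mul _) hy.le
            fun u hu => ih hu.1
      _ = mittagLefflerTerm α (k + 1) x
          + ∑ p ∈ antidiagonal k, mittagLefflerTerm α p.1 x * mittagLefflerTerm α (p.2 + 1) y := by
          rw [riemannLiouville_sum_mul hα0 _ _ fun p _ => hcont p.2,
            riemannLiouville_mittagLefflerTerm hα0 k hx]
          simp only [riemannLiouville_mittagLefflerTerm hα0 _ hy]
      _ = ∑ p ∈ antidiagonal (k + 1), mittagLefflerTerm α p.1 x * mittagLefflerTerm α p.2 y := by
          rw [Nat.sum_antidiagonal_succ', mittagLefflerTerm_zero, mul_one]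

theorem mittagLefflerTerm_one_add_lt (hα0 : 0 < α) (hα1 : α < 1) {x y : ℝ} (hx : 0 < x)
    (hy : 0 < y) :
    mittagLefflerTerm α 1 (x + y) < mittagLefflerTerm α 1 x + mittagLefflerTerm α 1 y := by
  simp only [mittagLefflerTerm, Nat.cast_one, mul_one, ← add_div]
  exact div_lt_div_of_pos_right (rpow_add_lt_add_rpow hx hy hα1) (Gamma_pos_of_pos (by linarith))

theorem mittagLefflerTerm_succ (hα : 0 ≤ α) (k : ℕ) {t : ℝ} (ht : 0 < t) :
    mittagLefflerTerm α (k + 1) t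
      = t ^ α * (Gamma (α * k + 1) / Gamma (α * k + 1 + α)) * mittagLefflerTerm α k t := by
  have hΓ : Gamma (α * k + 1) ≠ 0 := (Gamma_pos_of_pos (by positivity)).ne'
  rw [mittagLefflerTerm, mittagLefflerTerm, Nat.cast_succ,
    show α * (k + 1) + 1 = α * k + 1 + α by ring, mul_add_one, rpow_add ht]
  field_simp

theorem summable_mittagLefflerTerm (hα0 : 0 < α) (hα1 : α < 1) {t : ℝ} (ht : 0 < t) :
    Summable fun k => mittagLefflerTerm α k t := by
  have hpos (k : ℕ) : 0 < mittagLefflerTerm α k t :=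
    div_pos (rpow_pos_of_pos ht _) (Gamma_pos_of_pos (by positivity))
  have hratio (k : ℕ) : ‖mittagLefflerTerm α (k + 1) t‖ / ‖mittagLefflerTerm α k t‖
      = t ^ α * (Gamma (α * k + 1) / Gamma (α * k + 1 + α)) := by
    rw [norm_of_nonneg (hpos _).le, norm_of_nonneg (hpos _).le, mittagLefflerTerm_succ hα0.le k ht,
      mul_div_cancel_right₀ _ (hpos k).ne']
  have hlim := ((tendsto_Gamma_div_Gamma_add hα0 hα1).comp <| tendsto_atTop_add_const_right _ 1 <|
    tendsto_natCast_atTop_atTop.const_mul_atTop hα0).const_mul (t ^ α)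
  rw [mul_zero] at hlim
  exact summable_of_ratio_test_tendsto_lt_one zero_lt_one
    (.of_forall fun k => (hpos k).ne') (by simp only [hratio]; exact hlim)

end MittagLefflerTerm

theorem mittagLeffler_strict_subadd (α x y : ℝ) (hα0 : 0 < α) (hα1 : α < 1)
    (hx : 0 < x) (hy : 0 < y) :
    mittagLeffler α ((x + y) ^ α) < mittagLeffler α (x ^ α) * mittagLeffler α (y ^ α) := by
  have hsx := (summable_mittagLefflerTerm hα0 hα1 hx).norm
  have hsy := (summable_mittagLefflerTerm hα0 hα1 hy).norm
  rw [mittagLeffler_rpow_eq_tsum (by positivity), mittagLeffler_rpow_eq_tsum hx.le,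
    mittagLeffler_rpow_eq_tsum hy.le,
    tsum_mul_tsum_eq_tsum_sum_antidiagonal_of_summable_norm hsx hsy]
  refine Summable.tsum_lt_tsum_of_nonneg (i := 1)
    (fun k => mittagLefflerTerm_nonneg hα0.le k (by positivity))
    (fun k => mittagLefflerTerm_add_le hα0 hα1.le k hx hy) ?_
    (summable_norm_sum_mul_antidiagonal_of_summable_norm hsx hsy).of_norm
  simpa [Nat.sum_antidiagonal_succ', add_comm] using mittagLefflerTerm_one_add_lt hα0 hα1 hx hy
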